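/- In a finite exact potential game, any sequence of strict better-reply updates (where each update strictly increases the deviating player's utility) terminates in finitely many steps at a pure-strategy Nash equilibrium. -/

import Mathlib

/-- A strict better-reply step: player `m` unilaterally deviates and strictly
increases its own utility. -/
def BetterReplyStep {M : Type*} [DecidableEq M] {S : M → Type*}
    (U : ∀ m : M, (∀ n, S n) → ℝ) (s s' : ∀ n, S n) : Prop :=
  ∃ m : M, (∀ n, n ≠ m → s' n = s n) ∧ U m s' > U m s

/-- A pure-strategy Nash equilibrium: no player has a strictly improving
unilateral deviation. -/
def IsNashEq {M : Type*} [DecidableEq M] {S : M → Type*}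
    (U : ∀ m : M, (∀ n, S n) → ℝ) (s : ∀ n, S n) : Prop :=
  ∀ (m : M) (s' : ∀ n, S n), (∀ n, n ≠ m → s' n = s n) → U m s' ≤ U m s

/-! A better reply raises the potential by exactly the deviator's gain, so the potential
strictly increases along every better-reply path; a path through the finitely many
profiles along which a real function strictly increases cannot be infinite. -/

section PotentialGame

variable {M : Type*} {S : M → Type*}

def IsExactPotential (U : M → (∀ n, S n) → ℝ) (φ : (∀ n, S n) → ℝ) : Prop :=
  ∀ (m : M) (s s' : ∀ n, S n), (∀ n, n ≠ m → s' n = s n) → U m s' - U m s = φ s' - φ s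

variable [DecidableEq M] {U : M → (∀ n, S n) → ℝ}

theorem isNashEq_iff_not_exists_betterReplyStep {s : ∀ n, S n} :
    IsNashEq U s ↔ ¬ ∃ s', BetterReplyStep U s s' := by
  simp only [IsNashEq, BetterReplyStep, not_exists, not_and, not_lt, gt_iff_lt]
  exact ⟨fun h s' m hm => h m s' hm, fun h m s' hm => h s' m hm⟩

theorem IsExactPotential.lt_of_betterReplyStep {φ : (∀ n, S n) → ℝ}
    (hφ : IsExactPotential U φ) {s s' : ∀ n, S n} (hs : BetterReplyStep U s s') :
    φ s < φ s' := by
  obtain ⟨m, hm, hgain⟩ := hs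
  linarith [hφ m s s' hm]

theorem IsExactPotential.not_exists_betterReply_seq [Finite (∀ n, S n)]
    {φ : (∀ n, S n) → ℝ} (hφ : IsExactPotential U φ) :
    ¬ ∃ f : ℕ → (∀ n, S n), ∀ t, BetterReplyStep U (f t) (f (t + 1)) := by
  rintro ⟨f, hf⟩
  have hmono : StrictMono (φ ∘ f) :=
    strictMono_nat_of_lt_succ fun t => hφ.lt_of_betterReplyStep (hf t)
  exact not_injective_infinite_finite f hmono.injective.of_comp

end PotentialGame

/-- In a finite exact potential game, any sequence of strict better-reply updates
terminates in finitely many steps (there is no infinite strict better-reply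
sequence), and any profile from which no strict better reply exists is a
pure-strategy Nash equilibrium. -/
theorem finite_epg_better_reply_terminates_at_NE
    {M : Type*} [Fintype M] [DecidableEq M]
    {S : M → Type*} [∀ m, Fintype (S m)]
    (U : ∀ m : M, (∀ n, S n) → ℝ) (φ : (∀ n, S n) → ℝ)
    (hpot : ∀ (m : M) (s s' : ∀ n, S n), (∀ n, n ≠ m → s' n = s n) →
      U m s' - U m s = φ s' - φ s) :
    (¬ ∃ f : ℕ → (∀ n, S n), ∀ t, BetterReplyStep U (f t) (f (t + 1))) ∧
    (∀ s : ∀ n, S n, (¬ ∃ s', BetterReplyStep U s s') → IsNashEq U s) :=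
  ⟨IsExactPotential.not_exists_betterReply_seq hpot,
    fun _ => isNashEq_iff_not_exists_betterReplyStep.mpr⟩
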